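/- arXiv:math/0203111 — 3 statements merged into one kernel-verified Lean document; each statement's English description precedes it below -/
import Mathlib

section
/- Schur's polynomial analogue of Euler's pentagonal number theorem: for every nonnegative integer L, 1 = Σ_{j=−∞}^{∞} (−1)^j q^{j(3j−1)/2} · qbinom(2L, L + ⌊3j/2⌋). -/
namespace Dyson

/-- The rank of a partition: largest part minus number of parts. -/
def rank {n : ℕ} (π : n.Partition) : ℤ :=
  (π.parts.sup : ℤ) - π.parts.card

/-- The Euler product `(q;q)_∞`. -/
noncomputable def euler (q : ℝ) : ℝ := ∏' j : ℕ, (1 - q ^ (j + 1))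

/-- `Q_m(q)`: generating function for nonempty partitions of rank ≥ m. -/
noncomputable def Q (q : ℝ) (m : ℤ) : ℝ :=
  ∑' n : ℕ, (Nat.card {π : (n + 1).Partition // m ≤ rank π} : ℝ) * q ^ (n + 1)

noncomputable def qPoch (q : ℝ) (n : ℕ) : ℝ := ∏ j ∈ Finset.range n, (1 - q ^ (j + 1))

noncomputable def qbinom (q : ℝ) (a b : ℤ) : ℝ :=
  if 0 ≤ b ∧ b ≤ a then qPoch q a.toNat / (qPoch q b.toNat * qPoch q (a - b).toNat) else 0

noncomputable def QL (q : ℝ) (m L : ℤ) : ℝ :=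
  ∑' n : ℕ,
    (Nat.card {π : (n + 1).Partition // m ≤ rank π ∧ (π.parts.sup : ℤ) ≤ L} : ℝ) * q ^ (n + 1)

def partAt {n : ℕ} (π : n.Partition) (j : ℕ) : ℕ :=
  ((π.parts.sort (· ≤ ·)).reverse.getD j 0)

def inRankSet {n : ℕ} (π : n.Partition) (k : ℤ) : Prop :=
  ∃ j : ℕ, (j : ℤ) - partAt π (j + 1) = k

noncomputable def G (q : ℝ) (k : ℤ) : ℝ :=
  ∑' n : ℕ, (Nat.card {π : n.Partition // inRankSet π k} : ℝ) * q ^ n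

def crank {n : ℕ} (π : n.Partition) : ℤ :=
  if π.parts.count 1 = 0 then (π.parts.sup : ℤ)
  else ((π.parts.filter (fun p => π.parts.count 1 < p)).card : ℤ) - π.parts.count 1


lemma qPoch_zero (q : ℝ) : qPoch q 0 = 1 := by simp [qPoch]

lemma qPoch_ne_zero {q : ℝ} (hq : |q| < 1) (n : ℕ) : qPoch q n ≠ 0 := by
  unfold qPoch
  apply Finset.prod_ne_zero_iff.2
  intro j _
  have h1 : |q ^ (j + 1)| < 1 := by
    rw [abs_pow]
    calc |q| ^ (j + 1) ≤ |q| ^ 1 := by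
          apply pow_le_pow_of_le_one (abs_nonneg q) hq.le; omega
      _ = |q| := pow_one _
      _ < 1 := hq
  intro h
  have : q ^ (j + 1) = 1 := by linarith [sub_eq_zero.mp h]
  rw [this] at h1; norm_num at h1

lemma qPoch_succ (q : ℝ) (n : ℕ) : qPoch q (n + 1) = qPoch q n * (1 - q ^ (n + 1)) := by
  unfold qPoch; rw [Finset.prod_range_succ]

lemma one_sub_pow_ne_zero {q : ℝ} (hq : |q| < 1) (n : ℕ) : (1 - q ^ (n + 1)) ≠ 0 := by
  have := qPoch_ne_zero hq (n+1); rw [qPoch_succ] at this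
  exact right_ne_zero_of_mul this

lemma qbinom_natcast (q : ℝ) (a b : ℕ) :
    qbinom q (a : ℤ) (b : ℤ) =
      if b ≤ a then qPoch q a / (qPoch q b * qPoch q (a - b)) else 0 := by
  unfold qbinom
  by_cases h : b ≤ a
  · rw [if_pos (by omega), if_pos h, Int.toNat_natCast, Int.toNat_natCast,
      ← Nat.cast_sub h, Int.toNat_natCast]
  · rw [if_neg (by omega), if_neg h]

lemma qbinom_zero_of_not (q : ℝ) (a b : ℤ) (h : ¬(0 ≤ b ∧ b ≤ a)) : qbinom q a b = 0 := by
  unfold qbinom; rw [if_neg h]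

lemma qbinom_ne_zero_imp (q : ℝ) (a b : ℤ) (h : qbinom q a b ≠ 0) : 0 ≤ b ∧ b ≤ a := by
  by_contra hc; exact h (qbinom_zero_of_not q a b hc)

lemma zpow_add_nonneg (q : ℝ) {a b : ℤ} (ha : 0 ≤ a) (hb : 0 ≤ b) :
    q ^ (a + b) = q ^ a * q ^ b := by
  obtain ⟨a', rfl⟩ := Int.eq_ofNat_of_zero_le ha
  obtain ⟨b', rfl⟩ := Int.eq_ofNat_of_zero_le hb
  rw [← Nat.cast_add, zpow_natCast, zpow_natCast, zpow_natCast, pow_add]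

lemma pascalA {q : ℝ} (hq : |q| < 1) (n : ℕ) (k : ℤ) :
    qbinom q ((n : ℤ) + 1) k = qbinom q n k + q ^ ((n : ℤ) + 1 - k) * qbinom q n (k - 1) := by
  rw [show (n:ℤ) + 1 = ((n+1 : ℕ) : ℤ) by push_cast; ring]
  by_cases h0 : 0 ≤ k ∧ k ≤ (n : ℤ) + 1
  · obtain ⟨a, rfl⟩ := Int.eq_ofNat_of_zero_le h0.1
    have ha : a ≤ n + 1 := by exact_mod_cast h0.2
    rcases Nat.eq_zero_or_pos a with rfl | hpos
    · rw [qbinom_natcast, qbinom_natcast, qbinom_zero_of_not q _ _ (by omega)]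
      rw [if_pos (by omega), if_pos (by omega), qPoch_zero]
      rw [Nat.sub_zero, Nat.sub_zero, one_mul, one_mul,
        div_self (qPoch_ne_zero hq _), div_self (qPoch_ne_zero hq _)]
      norm_num
    rcases Nat.lt_or_ge n a with hlt | hle
    · have haa : a = n + 1 := by omega
      subst haa
      rw [qbinom_natcast, qbinom_natcast,
        show ((n+1:ℕ):ℤ) - 1 = ((n:ℕ):ℤ) by push_cast; ring, qbinom_natcast]
      rw [if_pos le_rfl, if_neg (by omega), if_pos le_rfl]
      rw [show ((n+1:ℕ):ℤ) - ((n+1:ℕ):ℤ) = 0 by ring, zpow_zero]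
      rw [show n+1-(n+1) = 0 by omega, show n - n = 0 by omega, qPoch_zero, mul_one, mul_one,
        div_self (qPoch_ne_zero hq _), div_self (qPoch_ne_zero hq _)]
      ring
    · obtain ⟨c, rfl⟩ : ∃ c, a = c + 1 := ⟨a - 1, by omega⟩
      obtain ⟨b, rfl⟩ : ∃ b, n = c + 1 + b := ⟨n - (c+1), by omega⟩
      rw [qbinom_natcast, qbinom_natcast,
        show ((c+1:ℕ):ℤ) - 1 = ((c:ℕ):ℤ) by push_cast; ring, qbinom_natcast]
      rw [if_pos (by omega), if_pos (by omega), if_pos (by omega)]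
      rw [show ((c+1+b+1:ℕ):ℤ) - ((c+1:ℕ):ℤ) = ((b+1:ℕ):ℤ) by push_cast; ring, zpow_natCast]
      rw [show c+1+b+1-(c+1) = b+1 by omega, show c+1+b-(c+1) = b by omega,
        show c+1+b-c = b+1 by omega]
      rw [qPoch_succ q (c+1+b), qPoch_succ q c, qPoch_succ q b]
      have hPc := qPoch_ne_zero hq c
      have hPb := qPoch_ne_zero hq b
      have hPn := qPoch_ne_zero hq (c+1+b)
      have h1 := one_sub_pow_ne_zero hq c
      have h2 := one_sub_pow_ne_zero hq b
      have h3 := one_sub_pow_ne_zero hq (c+1+b)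
      field_simp
      ring
  · rw [qbinom_zero_of_not q _ k (by omega), qbinom_zero_of_not q _ k (by omega),
      qbinom_zero_of_not q _ (k-1) (by omega)]
    ring

lemma pascalB {q : ℝ} (hq : |q| < 1) (n : ℕ) (k : ℤ) :
    qbinom q ((n : ℤ) + 1) k = q ^ k * qbinom q n k + qbinom q n (k - 1) := by
  rw [show (n:ℤ) + 1 = ((n+1 : ℕ) : ℤ) by push_cast; ring]
  by_cases h0 : 0 ≤ k ∧ k ≤ (n : ℤ) + 1
  · obtain ⟨a, rfl⟩ := Int.eq_ofNat_of_zero_le h0.1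
    have ha : a ≤ n + 1 := by exact_mod_cast h0.2
    rcases Nat.eq_zero_or_pos a with rfl | hpos
    · rw [qbinom_natcast, qbinom_natcast, qbinom_zero_of_not q _ _ (by omega)]
      rw [if_pos (by omega), if_pos (by omega), qPoch_zero]
      rw [Nat.sub_zero, Nat.sub_zero, one_mul, one_mul,
        div_self (qPoch_ne_zero hq _), div_self (qPoch_ne_zero hq _)]
      norm_num
    rcases Nat.lt_or_ge n a with hlt | hle
    · have haa : a = n + 1 := by omega
      subst haa
      rw [qbinom_natcast, qbinom_natcast,
        show ((n+1:ℕ):ℤ) - 1 = ((n:ℕ):ℤ) by push_cast; ring, qbinom_natcast]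
      rw [if_pos le_rfl, if_neg (by omega), if_pos le_rfl]
      rw [show n+1-(n+1) = 0 by omega, show n - n = 0 by omega, qPoch_zero, mul_one, mul_one,
        div_self (qPoch_ne_zero hq _), div_self (qPoch_ne_zero hq _)]
      ring
    · obtain ⟨c, rfl⟩ : ∃ c, a = c + 1 := ⟨a - 1, by omega⟩
      obtain ⟨b, rfl⟩ : ∃ b, n = c + 1 + b := ⟨n - (c+1), by omega⟩
      rw [qbinom_natcast, qbinom_natcast,
        show ((c+1:ℕ):ℤ) - 1 = ((c:ℕ):ℤ) by push_cast; ring, qbinom_natcast]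
      rw [if_pos (by omega), if_pos (by omega), if_pos (by omega)]
      rw [zpow_natCast]
      rw [show c+1+b+1-(c+1) = b+1 by omega, show c+1+b-(c+1) = b by omega,
        show c+1+b-c = b+1 by omega]
      rw [qPoch_succ q (c+1+b), qPoch_succ q c, qPoch_succ q b]
      have hPc := qPoch_ne_zero hq c
      have hPb := qPoch_ne_zero hq b
      have hPn := qPoch_ne_zero hq (c+1+b)
      have h1 := one_sub_pow_ne_zero hq c
      have h2 := one_sub_pow_ne_zero hq b
      have h3 := one_sub_pow_ne_zero hq (c+1+b)
      field_simp
      ring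
  · rw [qbinom_zero_of_not q _ k (by omega), qbinom_zero_of_not q _ k (by omega),
      qbinom_zero_of_not q _ (k-1) (by omega)]
    ring



noncomputable def tt (q : ℝ) (n : ℕ) (j : ℤ) : ℝ :=
  (-1 : ℝ) ^ j * q ^ (j * (3 * j - 1) / 2) * qbinom q n (((n : ℤ) + 3 * j).fdiv 2)

noncomputable def hh (q : ℝ) (n : ℕ) (j : ℤ) : ℝ :=
  if ((n : ℤ) + j) % 2 = 0 then
    (-1 : ℝ) ^ (j + 1) * q ^ (j * (3 * j - 1) / 2 + ((n : ℤ) + 2 - 3 * j) / 2) *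
      qbinom q n (((n : ℤ) + 3 * j - 2) / 2)
  else 0

lemma g_nonneg (j : ℤ) : 0 ≤ j * (3 * j - 1) / 2 := by
  have h : 0 ≤ j * (3 * j - 1) := by
    rcases le_or_gt j 0 with h | h
    · nlinarith
    · nlinarith
  exact Int.ediv_nonneg h (by norm_num)

lemma g_even (j : ℤ) : j * (3 * j - 1) % 2 = 0 := by
  rcases Int.even_or_odd j with ⟨m, rfl⟩ | ⟨m, rfl⟩
  · have h : (m + m) * (3 * (m + m) - 1) = 2 * (m * (3 * (m + m) - 1)) := by ring
    omega
  · have h : (2 * m + 1) * (3 * (2 * m + 1) - 1) = 2 * ((2 * m + 1) * (3 * m + 1)) := by ring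
    omega

lemma key {q : ℝ} (hq : |q| < 1) (n : ℕ) (j : ℤ) :
    tt q (n + 1) j - tt q n j = hh q n (j + 1) - hh q n j := by
  have hge := g_nonneg j
  rcases Int.even_or_odd ((n : ℤ) + j) with ⟨m, hm⟩ | ⟨m, hm⟩
  · -- even case, Pascal A
    have f1 : ((n : ℤ) + 3 * j).fdiv 2 = m + j := by
      rw [Int.fdiv_eq_ediv_of_nonneg _ (by norm_num)]; omega
    have f2 : (((n + 1 : ℕ) : ℤ) + 3 * j).fdiv 2 = m + j := by
      rw [Int.fdiv_eq_ediv_of_nonneg _ (by norm_num)]; push_cast; omega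
    have f3 : ((n : ℤ) + 2 - 3 * j) / 2 = (n : ℤ) + 1 - (m + j) := by omega
    have f4 : ((n : ℤ) + 3 * j - 2) / 2 = m + j - 1 := by omega
    unfold tt hh
    rw [if_neg (by omega), if_pos (by omega), f1, f2, f3, f4]
    rw [show ((n + 1 : ℕ) : ℤ) = (n : ℤ) + 1 by push_cast; ring]
    rw [pascalA hq n (m + j)]
    rw [zpow_add₀ (by norm_num : (-1 : ℝ) ≠ 0), zpow_one]
    by_cases hC : qbinom q (n : ℤ) (m + j - 1) = 0
    · rw [hC]; ring
    · have hr := qbinom_ne_zero_imp q _ _ hC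
      have he : 0 ≤ (n : ℤ) + 1 - (m + j) := by omega
      rw [zpow_add_nonneg q hge he]
      ring
  · -- odd case, Pascal B
    have f1 : ((n : ℤ) + 3 * j).fdiv 2 = m + j := by
      rw [Int.fdiv_eq_ediv_of_nonneg _ (by norm_num)]; omega
    have f2 : (((n + 1 : ℕ) : ℤ) + 3 * j).fdiv 2 = m + j + 1 := by
      rw [Int.fdiv_eq_ediv_of_nonneg _ (by norm_num)]; push_cast; omega
    have f3 : ((n : ℤ) + 3 * (j + 1) - 2) / 2 = m + j + 1 := by omega
    have f4 : ((n : ℤ) + 2 - 3 * (j + 1)) / 2 = m - 2 * j := by omega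
    have e1 : (j + 1) * (3 * (j + 1) - 1) = j * (3 * j - 1) + (6 * j + 2) := by ring
    have e2 := g_even j
    have e3 : (j + 1) * (3 * (j + 1) - 1) / 2 = j * (3 * j - 1) / 2 + (3 * j + 1) := by omega
    unfold tt hh
    rw [if_pos (by omega), if_neg (by omega), f1, f2, f3, f4, e3]
    rw [show ((n + 1 : ℕ) : ℤ) = (n : ℤ) + 1 by push_cast; ring]
    rw [pascalB hq n (m + j + 1)]
    rw [show m + j + 1 - 1 = m + j by ring]
    rw [show j + 1 + 1 = j + 2 by ring]
    rw [show (-1 : ℝ) ^ (j + 2) = (-1) ^ j * (-1) ^ (2 : ℤ) from zpow_add₀ (by norm_num) j 2]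
    by_cases hB : qbinom q (n : ℤ) (m + j + 1) = 0
    · rw [hB]; norm_num
    · have hr := qbinom_ne_zero_imp q _ _ hB
      have he : 0 ≤ m + j + 1 := by omega
      rw [show j * (3 * j - 1) / 2 + (3 * j + 1) + (m - 2 * j) =
        j * (3 * j - 1) / 2 + (m + j + 1) by ring]
      rw [zpow_add_nonneg q hge he]
      norm_num
      ring

lemma tt_eq_zero (q : ℝ) (n : ℕ) (j : ℤ)
    (h : ¬(0 ≤ ((n : ℤ) + 3 * j).fdiv 2 ∧ ((n : ℤ) + 3 * j).fdiv 2 ≤ (n : ℤ))) :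
    tt q n j = 0 := by
  unfold tt
  rw [qbinom_zero_of_not q _ _ h]
  ring

lemma qbinom_00 (q : ℝ) : qbinom q 0 0 = 1 := by
  unfold qbinom
  norm_num [qPoch]

lemma main_lemma {q : ℝ} (hq : |q| < 1) :
    ∀ n : ℕ, ∑ i ∈ Finset.range (2 * n + 5), tt q n ((i : ℤ) - ((n : ℤ) + 2)) = 1 := by
  intro n
  induction n with
  | zero =>
    simp only [Finset.sum_range_succ, Finset.sum_range_zero]
    norm_num
    rw [tt_eq_zero q 0 (-2) (by rw [Int.fdiv_eq_ediv_of_nonneg _ (by norm_num)]; omega),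
      tt_eq_zero q 0 (-1) (by rw [Int.fdiv_eq_ediv_of_nonneg _ (by norm_num)]; omega),
      tt_eq_zero q 0 1 (by rw [Int.fdiv_eq_ediv_of_nonneg _ (by norm_num)]; omega),
      tt_eq_zero q 0 2 (by rw [Int.fdiv_eq_ediv_of_nonneg _ (by norm_num)]; omega)]
    unfold tt
    norm_num
    exact qbinom_00 q
  | succ n ih =>
    have hhzero_top : hh q n (((2 * n + 5 : ℕ) : ℤ) - ((n : ℤ) + 2)) = 0 := by
      unfold hh
      rw [if_neg (by push_cast; omega)]
    have hhzero_bot : hh q n (((0 : ℕ) : ℤ) - ((n : ℤ) + 2)) = 0 := by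
      unfold hh
      rw [if_pos (by push_cast; omega)]
      rw [qbinom_zero_of_not q _ _ (by push_cast; omega)]
      ring
    have htop : tt q (n + 1) ((n : ℤ) + 3) = 0 := by
      apply tt_eq_zero
      rw [Int.fdiv_eq_ediv_of_nonneg _ (by norm_num)]
      push_cast; omega
    have hbot : tt q (n + 1) (((0 : ℕ) : ℤ) - ((↑(n + 1) : ℤ) + 2)) = 0 := by
      apply tt_eq_zero
      rw [Int.fdiv_eq_ediv_of_nonneg _ (by norm_num)]
      push_cast; omega
    rw [show 2 * (n + 1) + 5 = (2 * n + 5 + 1) + 1 by ring]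
    rw [Finset.sum_range_succ, Finset.sum_range_succ']
    have harg : ((2 * n + 5 + 1 : ℕ) : ℤ) - ((↑(n + 1) : ℤ) + 2) = (n : ℤ) + 3 := by
      push_cast; ring
    rw [harg, htop, hbot]
    have hterm : ∀ i ∈ Finset.range (2 * n + 5),
        tt q (n + 1) (((i + 1 : ℕ) : ℤ) - ((↑(n + 1) : ℤ) + 2)) =
          tt q n ((i : ℤ) - ((n : ℤ) + 2)) +
            (hh q n (((i + 1 : ℕ) : ℤ) - ((n : ℤ) + 2)) - hh q n ((i : ℤ) - ((n : ℤ) + 2))) := by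
      intro i _
      have ha : ((i + 1 : ℕ) : ℤ) - ((↑(n + 1) : ℤ) + 2) = (i : ℤ) - ((n : ℤ) + 2) := by
        push_cast; ring
      have hb : ((i + 1 : ℕ) : ℤ) - ((n : ℤ) + 2) = (i : ℤ) - ((n : ℤ) + 2) + 1 := by
        push_cast; ring
      rw [ha, hb]
      have := key hq n ((i : ℤ) - ((n : ℤ) + 2))
      linarith [this]
    rw [Finset.sum_congr rfl hterm, Finset.sum_add_distrib]
    rw [Finset.sum_range_sub (fun i => hh q n ((i : ℤ) - ((n : ℤ) + 2))) (2 * n + 5)]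
    rw [ih, hhzero_top, hhzero_bot]
    ring

/-- Schur:
`1 = Σ_{j∈ℤ} (-1)^j q^{j(3j-1)/2} qbinom(2L, L+⌊3j/2⌋)`. -/
theorem stmt12 (q : ℝ) (hq : |q| < 1) (L : ℕ) :
    (1 : ℝ) = ∑' j : ℤ,
      (-1 : ℝ) ^ j * q ^ (j * (3 * j - 1) / 2) *
        qbinom q (2 * L) (L + (3 * j).fdiv 2) := by
  have hterm : ∀ j : ℤ,
      (-1 : ℝ) ^ j * q ^ (j * (3 * j - 1) / 2) * qbinom q (2 * L) (L + (3 * j).fdiv 2) =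
        tt q (2 * L) j := by
    intro j
    unfold tt
    have hcast : (2 * (L : ℤ)) = ((2 * L : ℕ) : ℤ) := by push_cast; ring
    have harg : (L : ℤ) + (3 * j).fdiv 2 = (((2 * L : ℕ) : ℤ) + 3 * j).fdiv 2 := by
      rw [Int.fdiv_eq_ediv_of_nonneg _ (by norm_num), Int.fdiv_eq_ediv_of_nonneg _ (by norm_num)]
      push_cast; omega
    rw [hcast, harg]
  have hemb : Function.Injective (fun i : ℕ => (i : ℤ) - (2 * (L : ℤ) + 2)) := by
    intro a b hab
    simp only [sub_left_inj, Int.natCast_inj] at hab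
    exact hab
  rw [tsum_eq_sum (s := Finset.map ⟨_, hemb⟩ (Finset.range (4 * L + 5)))
    (f := fun j : ℤ => (-1 : ℝ) ^ j * q ^ (j * (3 * j - 1) / 2) *
      qbinom q (2 * L) (L + (3 * j).fdiv 2))]
  · rw [Finset.sum_map]
    have := main_lemma hq (2 * L)
    rw [show 2 * (2 * L) + 5 = 4 * L + 5 by ring] at this
    refine Eq.trans this.symm (Finset.sum_congr rfl ?_).symm
    intro i _
    simp only [Function.Embedding.coeFn_mk]
    rw [hterm]
    congr 1
  · intro j hj
    simp only [Finset.mem_map, Finset.mem_range, Function.Embedding.coeFn_mk, not_exists] at hj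
    have hrange : j < -(2 * (L : ℤ) + 2) ∨ 2 * (L : ℤ) + 2 < j := by
      by_contra hc
      push_neg at hc
      have h5 := hj (j + (2 * (L : ℤ) + 2)).toNat
      omega
    have h1 := Int.fdiv_eq_ediv_of_nonneg (3 * j) (by norm_num : (0:ℤ) ≤ 2)
    rw [qbinom_zero_of_not q _ _ (by omega)]
    ring


end Dyson
end

section
/- For k ≥ 0 and all n, the number of partitions of n with crank −k equals the number of partitions of n with crank k, plus δ_{n,1}δ_{k,1}; in particular for n > 1 partitions of n with crank k are equinumerous with partitions of n with crank −k. -/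
namespace Dyson

open Multiset

/-- Number of parts of `s` exceeding `j` (the `j`-th column height of the diagram). -/
def Nh (s : Multiset ℕ) (j : ℕ) : ℕ := (s.filter (fun p => j < p)).card

/-- The conjugate partition, as a multiset of (positive) column heights. -/
def mconj (s : Multiset ℕ) : Multiset ℕ :=
  ((Multiset.range s.sum).map (Nh s)).filter (fun x => 0 < x)

lemma Nh_anti (s : Multiset ℕ) {j j' : ℕ} (h : j ≤ j') : Nh s j' ≤ Nh s j := by
  apply card_le_card
  apply monotone_filter_right
  intro p hp
  omega

lemma Nh_pos_iff {s : Multiset ℕ} {j : ℕ} : 0 < Nh s j ↔ ∃ p ∈ s, j < p := by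
  simp [Nh, card_pos_iff_exists_mem]

lemma lt_sum_of_Nh_pos {s : Multiset ℕ} {j : ℕ} (h : 0 < Nh s j) : j < s.sum := by
  obtain ⟨p, hp, hjp⟩ := Nh_pos_iff.1 h
  exact lt_of_lt_of_le hjp (le_sum_of_mem hp)

lemma Nh_cons (a : ℕ) (s : Multiset ℕ) (j : ℕ) :
    Nh (a ::ₘ s) j = Nh s j + if j < a then 1 else 0 := by
  simp only [Nh, filter_cons]
  split <;> simp [add_comm]

lemma Nh_succ (s : Multiset ℕ) (j : ℕ) : Nh s j = Nh s (j + 1) + s.count (j + 1) := by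
  induction s using Multiset.induction_on with
  | empty => simp [Nh]
  | cons a s ih =>
    rw [Nh_cons, Nh_cons, count_cons, ih]
    split_ifs <;> omega

lemma eq_of_Nh {s t : Multiset ℕ} (h0 : 0 ∉ s) (h0' : 0 ∉ t)
    (h : ∀ j, Nh s j = Nh t j) : s = t := by
  ext m
  match m with
  | 0 =>
    rw [count_eq_zero_of_notMem h0, count_eq_zero_of_notMem h0']
  | m + 1 =>
    have h1 := Nh_succ s m
    have h2 := Nh_succ t m
    have h3 := h m
    have h4 := h (m + 1)
    omega

lemma Nh_mconj (s : Multiset ℕ) (t : ℕ) :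
    Nh (mconj s) t = card ((Multiset.range s.sum).filter (fun j => t < Nh s j)) := by
  rw [Nh, mconj, filter_filter]
  rw [filter_congr (q := fun x => t < x) (fun x _ => by constructor <;> intro h <;> omega)]
  rw [filter_map]
  simp [Function.comp]

lemma Nh_mconj_lt (s : Multiset ℕ) (t u : ℕ) : u < Nh (mconj s) t ↔ t < Nh s u := by
  rw [Nh_mconj]
  constructor
  · intro h
    by_contra h'
    push_neg at h'
    have hsub : (Multiset.range s.sum).filter (fun j => t < Nh s j) ⊆ Multiset.range u := by
      intro j hj
      rw [mem_filter] at hj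
      rw [mem_range]
      by_contra hju
      push_neg at hju
      have := Nh_anti s hju
      omega
    have hn : ((Multiset.range s.sum).filter (fun j => t < Nh s j)).Nodup :=
      (nodup_range _).filter _
    have := card_le_card ((le_iff_subset hn).2 hsub)
    rw [card_range] at this
    omega
  · intro h
    have hsub : Multiset.range (u + 1) ⊆ (Multiset.range s.sum).filter (fun j => t < Nh s j) := by
      intro j hj
      rw [mem_range] at hj
      have hj' : j ≤ u := by omega
      have h1 : t < Nh s j := lt_of_lt_of_le h (Nh_anti s hj')
      rw [mem_filter, mem_range]
      exact ⟨lt_sum_of_Nh_pos (by omega), h1⟩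
    have := card_le_card ((le_iff_subset (nodup_range _)).2 hsub)
    rw [card_range] at this
    omega

lemma zero_notMem_mconj (s : Multiset ℕ) : 0 ∉ mconj s := by
  intro h
  rw [mconj, mem_filter] at h
  exact absurd h.2 (by omega)

lemma mconj_mconj {s : Multiset ℕ} (h0 : 0 ∉ s) : mconj (mconj s) = s := by
  refine eq_of_Nh (zero_notMem_mconj _) h0 (fun j => ?_)
  have key : ∀ v, v < Nh (mconj (mconj s)) j ↔ v < Nh s j := fun v =>
    (Nh_mconj_lt (mconj s) j v).trans (Nh_mconj_lt s v j)
  have h1 := key (Nh (mconj (mconj s)) j)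
  have h2 := key (Nh s j)
  omega

lemma mem_mconj_le_card {s : Multiset ℕ} {x : ℕ} (h : x ∈ mconj s) : x ≤ card s := by
  rw [mconj, mem_filter, mem_map] at h
  obtain ⟨⟨j, _, hj⟩, _⟩ := h
  rw [← hj]
  exact card_le_card (filter_le _ _)

lemma sum_Nh {s : Multiset ℕ} {M : ℕ} (h : ∀ p ∈ s, p ≤ M) :
    ∑ j ∈ Finset.range M, Nh s j = s.sum := by
  induction s using Multiset.induction_on with
  | empty => simp [Nh]
  | cons a s ih =>
    have ha : a ≤ M := h a (mem_cons_self _ _)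
    have hs : ∀ p ∈ s, p ≤ M := fun p hp => h p (mem_cons_of_mem hp)
    simp only [Nh_cons]
    rw [Finset.sum_add_distrib, ih hs, Finset.sum_boole]
    have : (Finset.range M).filter (fun j => j < a) = Finset.range a := by
      ext j
      simp only [Finset.mem_filter, Finset.mem_range]
      omega
    rw [this]
    simp [sum_cons, add_comm]

lemma map_range_sum (f : ℕ → ℕ) (M : ℕ) :
    ((Multiset.range M).map f).sum = ∑ j ∈ Finset.range M, f j := rfl

lemma mconj_sum (s : Multiset ℕ) : (mconj s).sum = s.sum := by
  rw [mconj]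
  have h1 : (filter (fun x => 0 < x) ((Multiset.range s.sum).map (Nh s))).sum
      + (filter (fun a => ¬ 0 < a) ((Multiset.range s.sum).map (Nh s))).sum
      = ((Multiset.range s.sum).map (Nh s)).sum := sum_filter_add_sum_filter_not _
  have h2 : (filter (fun a => ¬ 0 < a) ((Multiset.range s.sum).map (Nh s))).sum = 0 := by
    apply sum_eq_zero
    intro x hx
    rw [mem_filter] at hx
    omega
  rw [map_range_sum, sum_Nh (fun p hp => le_sum_of_mem hp)] at h1
  omega

/-- Padding lemma: mapping `Nh s` over a long enough range gives the conjugate plus zeros. -/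
lemma range_map_Nh {s : Multiset ℕ} {M : ℕ} (h : ∀ p ∈ s, p ≤ M) :
    (Multiset.range M).map (Nh s) = mconj s + Multiset.replicate (M - card (mconj s)) 0 := by
  have hfil : ((Multiset.range M).map (Nh s)).filter (fun x => 0 < x) = mconj s := by
    rw [filter_map, mconj, filter_map]
    simp only [Function.comp]
    congr 1
    apply Multiset.ext.2
    intro j
    have hiff : ∀ (N : ℕ), (0 < Nh s j → j < N) →
        ((Multiset.range N).filter (fun i => 0 < Nh s i)).count j
          = if 0 < Nh s j then 1 else 0 := by
      intro N hN
      rw [count_filter]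
      split_ifs with hq
      · rw [count_eq_one_of_mem (nodup_range _) (mem_range.2 (hN hq))]
      · rfl
    rw [hiff M (fun hq => by obtain ⟨p, hp, hjp⟩ := Nh_pos_iff.1 hq; exact lt_of_lt_of_le hjp (h p hp)),
      hiff s.sum (fun hq => lt_sum_of_Nh_pos hq)]
  have hsplit := filter_add_not (fun x => 0 < x) ((Multiset.range M).map (Nh s))
  have hnot : ((Multiset.range M).map (Nh s)).filter (fun x => ¬ 0 < x)
      = Multiset.replicate (M - card (mconj s)) 0 := by
    apply eq_replicate.2
    constructor
    · have hc := congrArg card hsplit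
      rw [card_add, hfil] at hc
      simp only [card_map, card_range] at hc
      omega
    · intro b hb
      rw [mem_filter] at hb
      omega
  rw [← hsplit, hfil, hnot]


/-! ### The crank involution -/

def crankM (s : Multiset ℕ) : ℤ :=
  if s.count 1 = 0 then (s.sup : ℤ)
  else ((s.filter (fun p => s.count 1 < p)).card : ℤ) - s.count 1

def aOf (s : Multiset ℕ) : ℕ := (s.filter (fun p => s.count 1 < p)).card

def BOf (s : Multiset ℕ) : Multiset ℕ := s.filter (fun p => p ≠ 1 ∧ p ≤ s.count 1)

def alOf (s : Multiset ℕ) : Multiset ℕ :=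
  (s.filter (fun p => s.count 1 + 1 < p)).map (fun p => p - (s.count 1 + 1))

def BtOf (s : Multiset ℕ) : Multiset ℕ :=
  BOf s + Multiset.replicate ((mconj (alOf s)).count 1) 1

def theta (s : Multiset ℕ) : Multiset ℕ :=
  Multiset.replicate (aOf s) 1
    + (Multiset.range (s.count 1)).map (fun j => aOf s + 1 + Nh (BtOf s) j)
    + (mconj (alOf s)).filter (fun x => 1 < x)

def X (s : Multiset ℕ) : Multiset ℕ :=
  if s.count 1 = 0 then Multiset.replicate s.sup 1 + s.erase s.sup
  else if aOf s = 0 then s.filter (fun p => p ≠ 1) + {s.count 1}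
  else theta s

lemma X_of_count_eq_zero {s : Multiset ℕ} (h : s.count 1 = 0) :
    X s = Multiset.replicate s.sup 1 + s.erase s.sup := by
  simp only [X, if_pos h]

lemma X_of_pos {s : Multiset ℕ} (h : s.count 1 ≠ 0) (h' : aOf s = 0) :
    X s = s.filter (fun p => p ≠ 1) + {s.count 1} := by
  simp only [X, if_neg h, if_pos h']

lemma X_of_theta {s : Multiset ℕ} (h : s.count 1 ≠ 0) (h' : aOf s ≠ 0) :
    X s = theta s := by
  simp only [X, if_neg h, if_neg h']

lemma crankM_of_ne {s : Multiset ℕ} (hm : s.count 1 ≠ 0) :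
    crankM s = (aOf s : ℤ) - s.count 1 := by
  rw [crankM, if_neg hm]; rfl

lemma mem_mconj_pos {s : Multiset ℕ} {x : ℕ} (h : x ∈ mconj s) : 0 < x := by
  rw [mconj, mem_filter] at h
  exact h.2

lemma pos_split {Q : Multiset ℕ} (h : ∀ x ∈ Q, 0 < x) :
    Q.filter (fun x => 1 < x) + Multiset.replicate (Q.count 1) 1 = Q := by
  have h1 := filter_add_not (fun x => 1 < x) Q
  have h3 : Q.filter (fun x => ¬ 1 < x) = Q.filter (fun x => 1 = x) :=
    filter_congr (fun x hx => by have := h x hx; constructor <;> intro <;> omega)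
  have h2 : Q.filter (fun x => ¬ 1 < x) = Multiset.replicate (Q.count 1) 1 := by
    apply eq_replicate.2
    refine ⟨?_, fun b hb => by rw [mem_filter] at hb; have := h b hb.1; omega⟩
    rw [h3, count, countP_eq_card_filter]
  rw [h2] at h1
  exact h1

lemma sup_mem {s : Multiset ℕ} (h : s ≠ 0) : s.sup ∈ s := by
  induction s using Multiset.induction_on with
  | empty => exact absurd rfl h
  | cons a t ih =>
    rw [sup_cons]
    rcases eq_or_ne t 0 with rfl | ht
    · simp
    · rcases le_total t.sup a with h1 | h1
      · rw [sup_eq_left.2 h1]; exact mem_cons_self _ _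
      · rw [sup_eq_right.2 h1]; exact mem_cons_of_mem (ih ht)

lemma sum_map_const_add (c : ℕ) (t : Multiset ℕ) :
    (t.map (fun x => c + x)).sum = card t * c + t.sum := by
  induction t using Multiset.induction_on with
  | empty => simp
  | cons a t ih =>
    simp only [map_cons, sum_cons, ih, card_cons]
    ring

section ThetaLemmas

variable {s : Multiset ℕ}

lemma decomp (s : Multiset ℕ) :
    Multiset.replicate (s.count 1) 1 + BOf s + s.filter (fun p => s.count 1 < p) = s := by
  ext q
  rcases q with _ | _ | q
  · simp [BOf, count_replicate, count_filter]
  · simp only [BOf, count_add, count_replicate, count_filter, if_pos rfl]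
    split_ifs <;> simp_all <;> omega
  · simp only [BOf, count_add, count_replicate, count_filter]
    split_ifs <;> simp_all <;> omega

lemma BOf_bounds (hpos : ∀ p ∈ s, 0 < p) : ∀ p ∈ BOf s, 2 ≤ p ∧ p ≤ s.count 1 := by
  intro p hp
  rw [BOf, mem_filter] at hp
  have := hpos p hp.1
  exact ⟨by omega, hp.2.2⟩

lemma BOf_count_one (s : Multiset ℕ) : (BOf s).count 1 = 0 := by
  rw [BOf, count_filter]
  simp

lemma al_card_le (s : Multiset ℕ) : card (alOf s) ≤ aOf s := by
  rw [alOf, card_map, aOf]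
  exact card_le_card (monotone_filter_right s (fun p hp => by omega))

lemma al_pos (s : Multiset ℕ) : ∀ x ∈ alOf s, 0 < x := by
  intro x hx
  rw [alOf, mem_map] at hx
  obtain ⟨p, hp, hpx⟩ := hx
  rw [mem_filter] at hp
  omega

lemma P_le (s : Multiset ℕ) : ∀ x ∈ mconj (alOf s), x ≤ aOf s :=
  fun x hx => le_trans (mem_mconj_le_card hx) (al_card_le s)

lemma Bt_bounds (hpos : ∀ p ∈ s, 0 < p) (hm : s.count 1 ≠ 0) :
    ∀ p ∈ BtOf s, 0 < p ∧ p ≤ s.count 1 := by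
  intro p hp
  rw [BtOf] at hp
  rcases mem_add.1 hp with h | h
  · have := BOf_bounds hpos p h
    exact ⟨by omega, this.2⟩
  · rw [eq_of_mem_replicate h]
    omega

lemma Bt_count_one (s : Multiset ℕ) : (BtOf s).count 1 = (mconj (alOf s)).count 1 := by
  rw [BtOf, count_add, BOf_count_one, count_replicate_self, zero_add]

lemma theta_count_one (ha : aOf s ≠ 0) : (theta s).count 1 = aOf s := by
  rw [theta, count_add, count_add, count_replicate_self]
  rw [count_eq_zero.2 (fun h => by obtain ⟨j, _, hj⟩ := mem_map.1 h; omega)]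
  rw [count_filter]
  simp

lemma theta_big (ha : aOf s ≠ 0) :
    (theta s).filter (fun p => (theta s).count 1 < p)
      = (Multiset.range (s.count 1)).map (fun j => aOf s + 1 + Nh (BtOf s) j) := by
  rw [theta_count_one ha, theta, filter_add, filter_add]
  rw [filter_eq_nil.2 (fun x hx => by rw [eq_of_mem_replicate hx]; omega)]
  rw [filter_eq_self.2 (fun x hx => by obtain ⟨j, _, hj⟩ := mem_map.1 hx; omega)]
  rw [filter_eq_nil.2 (fun x hx => by
    rw [mem_filter] at hx
    have := P_le s x hx.1
    omega)]
  rw [zero_add, add_zero]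

lemma theta_aOf (ha : aOf s ≠ 0) : aOf (theta s) = s.count 1 := by
  rw [aOf, theta_big ha, card_map, card_range]

lemma theta_pos (s : Multiset ℕ) : ∀ p ∈ theta s, 0 < p := by
  intro p hp
  rw [theta] at hp
  rcases mem_add.1 hp with h | h
  · rcases mem_add.1 h with h' | h'
    · rw [eq_of_mem_replicate h']; omega
    · obtain ⟨j, _, hj⟩ := mem_map.1 h'; omega
  · rw [mem_filter] at h; omega

lemma theta_crank (hm : s.count 1 ≠ 0) (ha : aOf s ≠ 0) :
    crankM (theta s) = - crankM s := by
  rw [crankM_of_ne hm, crankM_of_ne (by rw [theta_count_one ha]; exact ha)]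
  have h1 : ((theta s).filter (fun p => (theta s).count 1 < p)).card = s.count 1 := by
    rw [theta_big ha, card_map, card_range]
  rw [aOf, h1, theta_count_one ha]
  push_cast
  ring

lemma theta_BOf (hm : s.count 1 ≠ 0) (ha : aOf s ≠ 0) :
    BOf (theta s) = (mconj (alOf s)).filter (fun x => 1 < x) := by
  rw [BOf, theta_count_one ha, theta, filter_add, filter_add]
  rw [filter_eq_nil.2 (fun x hx => by rw [eq_of_mem_replicate hx]; simp)]
  rw [filter_eq_nil.2 (fun x hx => by
    obtain ⟨j, _, hj⟩ := mem_map.1 hx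
    rintro ⟨-, h2⟩
    omega)]
  rw [filter_eq_self.2 (fun x hx => by
    rw [mem_filter] at hx
    have := P_le s x hx.1
    have := hx.2
    exact ⟨by omega, by omega⟩)]
  rw [zero_add, zero_add]

lemma theta_alOf (hpos : ∀ p ∈ s, 0 < p) (hm : s.count 1 ≠ 0) (ha : aOf s ≠ 0) :
    alOf (theta s) = mconj (BtOf s) := by
  have hb := Bt_bounds hpos hm
  rw [alOf, theta_count_one ha, theta, filter_add, filter_add]
  rw [filter_eq_nil.2 (fun x hx => by rw [eq_of_mem_replicate hx]; omega)]
  rw [show Multiset.filter (fun p => aOf s + 1 < p)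
        (Multiset.filter (fun x => 1 < x) (mconj (alOf s))) = 0 from
      filter_eq_nil.2 (fun x hx => by
        rw [mem_filter] at hx
        have := P_le s x hx.1
        omega)]
  rw [zero_add, add_zero]
  rw [filter_map]
  rw [map_map]
  have hre := range_map_Nh (s := BtOf s) (M := s.count 1) (fun p hp => (hb p hp).2)
  have hfil : filter (fun x => 0 < x) ((Multiset.range (s.count 1)).map (Nh (BtOf s)))
      = mconj (BtOf s) := by
    rw [hre, filter_add]
    rw [filter_eq_self.2 (fun x hx => mem_mconj_pos hx)]
    rw [filter_eq_nil.2 (fun x hx => by rw [eq_of_mem_replicate hx]; omega)]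
    rw [add_zero]
  rw [← hfil, filter_map]
  have hflt : Multiset.filter ((fun p => aOf s + 1 < p) ∘ fun j => aOf s + 1 + Nh (BtOf s) j)
        (Multiset.range (s.count 1))
      = Multiset.filter ((fun x => 0 < x) ∘ Nh (BtOf s)) (Multiset.range (s.count 1)) :=
    filter_congr (fun j _ => by
      simp only [Function.comp]
      constructor <;> intro <;> omega)
  rw [hflt]
  apply map_congr rfl
  intro j hj
  simp only [Function.comp]
  omega

lemma theta_BtOf (hpos : ∀ p ∈ s, 0 < p) (hm : s.count 1 ≠ 0) (ha : aOf s ≠ 0) :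
    BtOf (theta s) = mconj (alOf s) := by
  have h0 : 0 ∉ BtOf s := fun h => by have := (Bt_bounds hpos hm 0 h).1; omega
  rw [BtOf, theta_BOf hm ha, theta_alOf hpos hm ha, mconj_mconj h0, Bt_count_one]
  exact pos_split (fun x hx => mem_mconj_pos hx)

lemma AOf_split (s : Multiset ℕ) :
    s.filter (fun p => s.count 1 < p)
      = (alOf s).map (fun x => s.count 1 + 1 + x)
        + Multiset.replicate (aOf s - card (alOf s)) (s.count 1 + 1) := by
  have h1 : (alOf s).map (fun x => s.count 1 + 1 + x) = s.filter (fun p => s.count 1 + 1 < p) := by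
    rw [alOf, map_map]
    calc ((s.filter (fun p => s.count 1 + 1 < p)).map
            ((fun x => s.count 1 + 1 + x) ∘ fun p => p - (s.count 1 + 1)))
        = (s.filter (fun p => s.count 1 + 1 < p)).map id := by
          apply map_congr rfl
          intro p hp
          rw [mem_filter] at hp
          simp only [Function.comp, id]
          omega
      _ = s.filter (fun p => s.count 1 + 1 < p) := map_id _
  have h2 : (s.filter (fun p => s.count 1 < p)).filter (fun p => s.count 1 + 1 < p)
      = s.filter (fun p => s.count 1 + 1 < p) := by
    rw [filter_filter]
    exact filter_congr (fun p _ => by constructor <;> intro <;> omega)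
  have h3 : (s.filter (fun p => s.count 1 < p)).filter (fun p => ¬ s.count 1 + 1 < p)
      = Multiset.replicate (aOf s - card (alOf s)) (s.count 1 + 1) := by
    apply eq_replicate.2
    constructor
    · have hc := congrArg card (filter_add_not (fun p => s.count 1 + 1 < p)
        (s.filter (fun p => s.count 1 < p)))
      rw [card_add, h2] at hc
      have : card (alOf s) = card (s.filter (fun p => s.count 1 + 1 < p)) := by
        rw [alOf, card_map]
      rw [aOf]
      omega
    · intro b hb
      rw [mem_filter, mem_filter] at hb
      omega
  have h4 := filter_add_not (fun p => s.count 1 + 1 < p) (s.filter (fun p => s.count 1 < p))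
  rw [h2, h3] at h4
  rw [h1, h4]

lemma theta_theta (hpos : ∀ p ∈ s, 0 < p) (hm : s.count 1 ≠ 0) (ha : aOf s ≠ 0) :
    theta (theta s) = s := by
  have h0al : 0 ∉ alOf s := fun h => by have := al_pos s 0 h; omega
  have hth : theta (theta s)
      = Multiset.replicate (s.count 1) 1
        + (Multiset.range (aOf s)).map (fun j => s.count 1 + 1 + Nh (mconj (alOf s)) j)
        + (BtOf s).filter (fun x => 1 < x) := by
    rw [theta, theta_aOf ha, theta_count_one ha, theta_BtOf hpos hm ha,
      theta_alOf hpos hm ha, mconj_mconj (fun h => by have := (Bt_bounds hpos hm 0 h).1; omega)]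
  rw [hth]
  have h5 : (BtOf s).filter (fun x => 1 < x) = BOf s := by
    rw [BtOf, filter_add]
    rw [filter_eq_self.2 (fun x hx => by have := BOf_bounds hpos x hx; omega)]
    rw [filter_eq_nil.2 (fun x hx => by rw [eq_of_mem_replicate hx]; omega)]
    rw [add_zero]
  have h6 : (Multiset.range (aOf s)).map (fun j => s.count 1 + 1 + Nh (mconj (alOf s)) j)
      = s.filter (fun p => s.count 1 < p) := by
    have hmm : (Multiset.range (aOf s)).map (Nh (mconj (alOf s)))
        = alOf s + Multiset.replicate (aOf s - card (alOf s)) 0 := by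
      have := range_map_Nh (s := mconj (alOf s)) (M := aOf s) (P_le s)
      rw [mconj_mconj h0al] at this
      exact this
    calc (Multiset.range (aOf s)).map (fun j => s.count 1 + 1 + Nh (mconj (alOf s)) j)
        = ((Multiset.range (aOf s)).map (Nh (mconj (alOf s)))).map
            (fun x => s.count 1 + 1 + x) := by rw [map_map]; rfl
      _ = (alOf s).map (fun x => s.count 1 + 1 + x)
            + Multiset.replicate (aOf s - card (alOf s)) (s.count 1 + 1) := by
          rw [hmm, Multiset.map_add, map_replicate]
      _ = s.filter (fun p => s.count 1 < p) := (AOf_split s).symm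
  rw [h5, h6]
  have hd := decomp s
  calc Multiset.replicate (s.count 1) 1 + s.filter (fun p => s.count 1 < p) + BOf s
      = Multiset.replicate (s.count 1) 1 + BOf s + s.filter (fun p => s.count 1 < p) := by
        abel
    _ = s := hd

lemma theta_sum (hpos : ∀ p ∈ s, 0 < p) (hm : s.count 1 ≠ 0) (ha : aOf s ≠ 0) :
    (theta s).sum = s.sum := by
  have hb := Bt_bounds hpos hm
  have hcard := al_card_le s
  have hsum1 : ((Multiset.range (s.count 1)).map (fun j => aOf s + 1 + Nh (BtOf s) j)).sum
      = s.count 1 * (aOf s + 1) + (BtOf s).sum := by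
    rw [map_range_sum, Finset.sum_add_distrib, Finset.sum_const, Finset.card_range,
      sum_Nh (fun p hp => (hb p hp).2), smul_eq_mul]
  have hsum2 : (BtOf s).sum = (BOf s).sum + (mconj (alOf s)).count 1 := by
    rw [BtOf, sum_add, sum_replicate, smul_eq_mul, mul_one]
  have hsum3 : ((mconj (alOf s)).filter (fun x => 1 < x)).sum + (mconj (alOf s)).count 1
      = (alOf s).sum := by
    have := congrArg Multiset.sum (pos_split (fun x hx => mem_mconj_pos (s := alOf s) hx))
    rw [sum_add, sum_replicate, smul_eq_mul, mul_one] at this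
    rw [this, mconj_sum]
  have hsum4 : s.sum = s.count 1 + (BOf s).sum + (s.filter (fun p => s.count 1 < p)).sum := by
    have := congrArg Multiset.sum (decomp s)
    rw [sum_add, sum_add, sum_replicate, smul_eq_mul, mul_one] at this
    omega
  have hsum5 : (s.filter (fun p => s.count 1 < p)).sum
      = card (alOf s) * (s.count 1 + 1) + (alOf s).sum
        + (aOf s - card (alOf s)) * (s.count 1 + 1) := by
    rw [AOf_split s, sum_add, sum_replicate, smul_eq_mul, sum_map_const_add]
    try ring
  have hsum6 : card (alOf s) * (s.count 1 + 1) + (aOf s - card (alOf s)) * (s.count 1 + 1)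
      = aOf s * (s.count 1 + 1) := by
    rw [← add_mul, Nat.add_sub_cancel' hcard]
  rw [theta, sum_add, sum_add, sum_replicate, smul_eq_mul, mul_one, hsum1, hsum2]
  have key : aOf s + (s.count 1 * (aOf s + 1) + ((BOf s).sum + (mconj (alOf s)).count 1))
      + ((mconj (alOf s)).filter (fun x => 1 < x)).sum
      = s.count 1 + (BOf s).sum + (aOf s * (s.count 1 + 1) + (alOf s).sum) := by
    have e1 : s.count 1 * (aOf s + 1) = s.count 1 * aOf s + s.count 1 := by ring
    have e2 : aOf s * (s.count 1 + 1) = s.count 1 * aOf s + aOf s := by ring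
    omega
  rw [key, hsum4]
  omega

end ThetaLemmas

/-! ### The involution packaged -/

lemma X_spec {s : Multiset ℕ} (hpos : ∀ p ∈ s, 0 < p) (hne : s ≠ {1}) :
    (∀ p ∈ X s, 0 < p) ∧ (X s).sum = s.sum ∧ crankM (X s) = - crankM s ∧ X (X s) = s := by
  by_cases hc : s.count 1 = 0
  · -- no ones
    rcases eq_or_ne s 0 with rfl | hs0
    · refine ⟨?_, ?_, ?_, ?_⟩ <;> simp [X, crankM]
    · have hcm : s.sup ∈ s := sup_mem hs0
      have h1mem : (1 : ℕ) ∉ s := count_eq_zero.1 hc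
      have h2 : ∀ p ∈ s, 2 ≤ p := fun p hp => by
        have h3 := hpos p hp
        have h4 : p ≠ 1 := fun h => h1mem (h ▸ hp)
        omega
      have hc2 : 2 ≤ s.sup := h2 _ hcm
      have hXs : X s = Multiset.replicate s.sup 1 + s.erase s.sup := X_of_count_eq_zero hc
      have herase : ∀ p ∈ s.erase s.sup, 2 ≤ p := fun p hp => h2 p (mem_of_mem_erase hp)
      have hXpos : ∀ p ∈ X s, 0 < p := by
        rw [hXs]
        intro p hp
        rcases mem_add.1 hp with h | h
        · rw [eq_of_mem_replicate h]; omega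
        · have := herase p h; omega
      have hscons : s = s.sup ::ₘ s.erase s.sup := (cons_erase hcm).symm
      have hsum : (X s).sum = s.sum := by
        rw [hXs, sum_add, sum_replicate, smul_eq_mul, mul_one]
        conv_rhs => rw [hscons]
        rw [sum_cons]
      have hcount1 : (X s).count 1 = s.sup := by
        rw [hXs, count_add, count_replicate_self,
          count_eq_zero.2 (fun h => h1mem (mem_of_mem_erase h)), add_zero]
      have hfilc : (X s).filter (fun p => s.sup < p) = 0 := by
        apply filter_eq_nil.2
        intro p hp
        rw [hXs] at hp
        rcases mem_add.1 hp with h | h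
        · rw [eq_of_mem_replicate h]; omega
        · have := le_sup (mem_of_mem_erase h); omega
      have haX : aOf (X s) = 0 := by
        rw [aOf, hcount1, hfilc, card_zero]
      have hcrank : crankM (X s) = - crankM s := by
        rw [crankM_of_ne (by rw [hcount1]; omega), haX, hcount1, crankM, if_pos hc]
        push_cast
        ring
      refine ⟨hXpos, hsum, hcrank, ?_⟩
      rw [X_of_pos (by rw [hcount1]; omega) haX, hcount1, hXs, filter_add]
      rw [filter_eq_nil.2 (fun p hp => by rw [eq_of_mem_replicate hp]; simp)]
      rw [filter_eq_self.2 (fun p hp => by have := herase p hp; omega)]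
      rw [zero_add, add_comm, singleton_add, ← hscons]
  · by_cases ha : aOf s = 0
    · -- m ones, no large parts
      have hA0 : s.filter (fun p => s.count 1 < p) = 0 := card_eq_zero.1 ha
      have hdec : Multiset.replicate (s.count 1) 1 + BOf s = s := by
        have := decomp s
        rw [hA0, add_zero] at this
        exact this
      have hm2 : 2 ≤ s.count 1 := by
        by_contra h
        have hm1 : s.count 1 = 1 := by omega
        have hB0 : BOf s = 0 := by
          apply eq_zero_of_forall_notMem
          intro p hp
          have := BOf_bounds hpos p hp
          omega
        apply hne
        rw [← hdec, hB0, hm1, add_zero, replicate_one]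
      have hXs : X s = BOf s + {s.count 1} := by
        rw [X_of_pos hc ha]
        congr 1
        conv_lhs => rw [← hdec]
        rw [filter_add]
        rw [filter_eq_nil.2 (fun p hp => by rw [eq_of_mem_replicate hp]; simp)]
        rw [filter_eq_self.2 (fun p hp => by have := BOf_bounds hpos p hp; omega)]
        rw [zero_add]
      have hXc1 : (X s).count 1 = 0 := by
        rw [hXs, count_add, BOf_count_one, count_singleton, if_neg (by omega), add_zero]
      have hXpos : ∀ p ∈ X s, 0 < p := by
        rw [hXs]
        intro p hp
        rcases mem_add.1 hp with h | h
        · have := BOf_bounds hpos p h; omega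
        · rw [mem_singleton.1 h]; omega
      have hsum : (X s).sum = s.sum := by
        rw [hXs, sum_add, sum_singleton]
        have := congrArg Multiset.sum hdec
        rw [sum_add, sum_replicate, smul_eq_mul, mul_one] at this
        omega
      have hsup : (X s).sup = s.count 1 := by
        apply le_antisymm
        · apply sup_le.2
          intro b hb
          rw [hXs] at hb
          rcases mem_add.1 hb with h | h
          · exact (BOf_bounds hpos b h).2
          · rw [mem_singleton.1 h]
        · exact le_sup (by rw [hXs]; exact mem_add.2 (Or.inr (mem_singleton.2 rfl)))
      have hcrank : crankM (X s) = - crankM s := by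
        rw [crankM, if_pos hXc1, hsup, crankM_of_ne hc, ha]
        push_cast
        ring
      refine ⟨hXpos, hsum, hcrank, ?_⟩
      rw [X_of_count_eq_zero hXc1, hsup]
      have : (X s).erase (s.count 1) = BOf s := by
        rw [hXs, add_comm, singleton_add, erase_cons_head]
      rw [this, hdec]
    · -- generic theta branch
      have hXs : X s = theta s := X_of_theta hc ha
      have hc' : (theta s).count 1 ≠ 0 := by rw [theta_count_one ha]; exact ha
      have ha' : aOf (theta s) ≠ 0 := by rw [theta_aOf ha]; exact hc
      refine ⟨?_, ?_, ?_, ?_⟩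
      · rw [hXs]; exact theta_pos s
      · rw [hXs]; exact theta_sum hpos hc ha
      · rw [hXs]; exact theta_crank hc ha
      · rw [hXs, X_of_theta hc' ha']
        exact theta_theta hpos hc ha

/-! ### Transfer to partitions -/

lemma crank_eq_crankM {n : ℕ} (π : n.Partition) : crank π = crankM π.parts := rfl

lemma parts_ne_one {n : ℕ} (hn : n ≠ 1) (π : n.Partition) : π.parts ≠ {1} := by
  intro h
  apply hn
  rw [← π.parts_sum, h, sum_singleton]

/-- The crank-negating involution on partitions. -/
def XPart {n : ℕ} (hn : n ≠ 1) (π : n.Partition) : n.Partition where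
  parts := X π.parts
  parts_pos := fun {i} hi =>
    (X_spec (fun p hp => π.parts_pos hp) (parts_ne_one hn π)).1 i hi
  parts_sum := by
    rw [(X_spec (fun p hp => π.parts_pos hp) (parts_ne_one hn π)).2.1, π.parts_sum]

lemma crank_XPart {n : ℕ} (hn : n ≠ 1) (π : n.Partition) :
    crank (XPart hn π) = - crank π := by
  rw [crank_eq_crankM, crank_eq_crankM]
  exact (X_spec (fun p hp => π.parts_pos hp) (parts_ne_one hn π)).2.2.1

lemma XPart_XPart {n : ℕ} (hn : n ≠ 1) (π : n.Partition) :
    XPart hn (XPart hn π) = π :=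
  Nat.Partition.ext ((X_spec (fun p hp => π.parts_pos hp) (parts_ne_one hn π)).2.2.2)

lemma card_crank_neg {n : ℕ} (hn : n ≠ 1) (c : ℤ) :
    Nat.card {π : n.Partition // crank π = c} = Nat.card {π : n.Partition // crank π = -c} := by
  apply Nat.card_congr
  refine ⟨fun x => ⟨XPart hn x.1, by rw [crank_XPart, x.2]⟩,
    fun x => ⟨XPart hn x.1, by rw [crank_XPart, x.2, neg_neg]⟩, ?_, ?_⟩
  · intro x
    exact Subtype.ext (XPart_XPart hn x.1)
  · intro x
    exact Subtype.ext (XPart_XPart hn x.1)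


/-- for k ≥ 0, `ĉ_{-k}(n) = ĉ_k(n) + δ_{n,1}δ_{k,1}`. -/
theorem stmt18 (k : ℤ) (hk : 0 ≤ k) (n : ℕ) :
    Nat.card {π : n.Partition // crank π = -k} =
      Nat.card {π : n.Partition // crank π = k} +
        (if n = 1 ∧ k = 1 then 1 else 0) := by
  by_cases hn : n = 1
  · subst hn
    have hcr : ∀ π : Nat.Partition 1, crank π = -1 := by
      intro π
      rw [crank_eq_crankM, show π.parts = {1} from Nat.Partition.partition_one_parts π]
      rw [crankM]
      norm_num [Multiset.filter_singleton]
    by_cases hk1 : k = 1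
    · subst hk1
      rw [if_pos ⟨rfl, rfl⟩]
      have h1 : Nat.card {π : Nat.Partition 1 // crank π = -1} = 1 := by
        rw [Nat.card_congr (Equiv.subtypeUnivEquiv hcr)]
        exact Nat.card_unique
      have h2 : Nat.card {π : Nat.Partition 1 // crank π = 1} = 0 := by
        have hemp : IsEmpty {π : Nat.Partition 1 // crank π = 1} := ⟨fun x => by
          have h3 := hcr x.1
          rw [x.2] at h3
          norm_num at h3⟩
        exact Nat.card_of_isEmpty
      rw [h1, h2]
    · rw [if_neg (by tauto)]
      have h1 : Nat.card {π : Nat.Partition 1 // crank π = -k} = 0 := by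
        have hemp : IsEmpty {π : Nat.Partition 1 // crank π = -k} := ⟨fun x => by
          have h3 := hcr x.1
          rw [x.2] at h3
          have h4 : k = 1 := by omega
          exact hk1 h4⟩
        exact Nat.card_of_isEmpty
      have h2 : Nat.card {π : Nat.Partition 1 // crank π = k} = 0 := by
        have hemp : IsEmpty {π : Nat.Partition 1 // crank π = k} := ⟨fun x => by
          have h3 := hcr x.1
          rw [x.2] at h3
          omega⟩
        exact Nat.card_of_isEmpty
      rw [h1, h2]
  · rw [if_neg (by tauto), add_zero]
    exact (card_crank_neg hn k).symm

end Dyson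
end

section
/- Gauss's identity: (q²;q²)_∞ / (q;q²)_∞ = Σ_{j≥0} q^{j(j+1)/2}, i.e., the generating function for partitions into parts each appearing an even number of times divided appropriately equals the sum of q raised to triangular numbers. -/
namespace Gauss

open Finset Filter Topology

variable {q : ℝ}

lemma triangle_succ (j : ℕ) : (j + 1) * (j + 1 + 1) / 2 = j * (j + 1) / 2 + (j + 1) := by
  have : (j + 1) * (j + 1 + 1) = j * (j + 1) + 2 * (j + 1) := by ring
  omega

lemma one_sub_abs_le_one_sub_pow (hq : |q| < 1) {n : ℕ} (hn : n ≠ 0) : 1 - |q| ≤ 1 - q ^ n := by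
  have h : |q| ^ n ≤ |q| := pow_le_of_le_one (abs_nonneg q) hq.le hn
  linarith [abs_pow q n ▸ le_abs_self (q ^ n)]

lemma one_sub_pow_pos (hq : |q| < 1) {n : ℕ} (hn : n ≠ 0) : 0 < 1 - q ^ n :=
  (sub_pos.2 hq).trans_le (one_sub_abs_le_one_sub_pow hq hn)

lemma one_sub_pow_ne_zero (hq : |q| < 1) {n : ℕ} (hn : n ≠ 0) : 1 - q ^ n ≠ 0 :=
  (one_sub_pow_pos hq hn).ne'

/-- For `j ≤ m` this is `(q;q)_m (q;q)_{m+1} / ((q;q)_{m-j} (q;q)_{m+1+j})`, so `partialSum q m` is a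
renormalisation of the finite triple product `∑_{j ≤ m} q^{j(j+1)/2} [2m+1, m-j]_q = (-q;q)_m²`.
For `j > m` the factor `1 - q^(m - m)` makes it vanish. -/
noncomputable def weight (q : ℝ) (m j : ℕ) : ℝ :=
  ∏ i ∈ range j, (1 - q ^ (m - i)) / (1 - q ^ (m + 2 + i))

lemma weight_succ (m j : ℕ) :
    weight q m (j + 1) = weight q m j * ((1 - q ^ (m - j)) / (1 - q ^ (m + 2 + j))) :=
  prod_range_succ _ _

lemma weight_eq_zero_of_lt {m j : ℕ} (h : m < j) : weight q m j = 0 :=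
  prod_eq_zero (mem_range.2 h) (by simp)

lemma weight_mul_contiguous (hq : |q| < 1) (m j : ℕ) :
    weight q m j * ((1 - q ^ (m + 1)) * (1 - q ^ (m + 2))) =
      weight q (m + 1) j * ((1 - q ^ (m + 1 - j)) * (1 - q ^ (m + 2 + j))) := by
  induction j with
  | zero => simp [weight]
  | succ j ih =>
    rw [weight_succ, weight_succ, show m + 1 - (j + 1) = m - j by omega,
      show m + 1 + 2 + j = m + 2 + (j + 1) by omega]
    have h₁ := one_sub_pow_ne_zero hq (n := m + 2 + j) (by omega)
    have h₂ := one_sub_pow_ne_zero hq (n := m + 2 + (j + 1)) (by omega)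
    field_simp
    linear_combination (1 - q ^ (m - j)) * ih

noncomputable def partialSum (q : ℝ) (m : ℕ) : ℝ :=
  ∑ j ∈ range (m + 1), q ^ (j * (j + 1) / 2) * weight q m j

lemma partialSum_eq_sum_range {m n : ℕ} (h : m < n) :
    partialSum q m = ∑ j ∈ range n, q ^ (j * (j + 1) / 2) * weight q m j :=
  sum_subset (range_subset_range.2 h) fun j _ hj ↦ by
    rw [weight_eq_zero_of_lt (by simpa using hj), mul_zero]

lemma partialSum_eq_tsum (m : ℕ) :
    partialSum q m = ∑' j, q ^ (j * (j + 1) / 2) * weight q m j :=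
  (tsum_eq_sum fun j hj ↦ by
    rw [weight_eq_zero_of_lt (by simpa using hj), mul_zero]).symm

noncomputable def certificate (q : ℝ) (m j : ℕ) : ℝ :=
  q ^ (j * (j + 1) / 2) * weight q m j * (q ^ (m - j) * (1 - q ^ j) * (1 - q ^ (m + 1 + j)))

lemma certificate_zero (m : ℕ) : certificate q m 0 = 0 := by
  simp [certificate]

lemma certificate_eq_zero_of_lt {m j : ℕ} (h : m < j) : certificate q m j = 0 := by
  simp [certificate, weight_eq_zero_of_lt h]

lemma certificate_sub_certificate_succ (hq : |q| < 1) {m j : ℕ} (hj : j ≤ m) :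
    certificate q m j - certificate q m (j + 1) =
      q ^ (j * (j + 1) / 2) * weight q m j *
        ((1 - q ^ m) * (1 - q ^ (2 * m + 1)) -
          (1 + q ^ m) * (1 - q ^ (m - j)) * (1 - q ^ (m + 1 + j))) := by
  obtain ⟨k, rfl⟩ := Nat.exists_eq_add_of_le hj
  cases k with
  | zero =>
    simp only [add_zero, Nat.sub_self, pow_zero, sub_self, certificate,
      weight_eq_zero_of_lt (Nat.lt_succ_self j)]
    ring
  | succ k =>
    rw [certificate, certificate, triangle_succ, weight_succ, show j + (k + 1) - j = k + 1 by omega,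
      show j + (k + 1) - (j + 1) = k by omega]
    have h := one_sub_pow_ne_zero hq (n := j + (k + 1) + 2 + j) (by omega)
    field_simp
    ring

lemma partialSum_succ (hq : |q| < 1) (m : ℕ) :
    (1 - q ^ (2 * m + 3)) * partialSum q (m + 1) =
      (1 + q ^ (m + 1)) * (1 - q ^ (m + 2)) * partialSum q m := by
  set t := fun j ↦ q ^ (j * (j + 1) / 2) * weight q (m + 1) j
  have telescope : ∑ j ∈ range (m + 2), t j * ((1 - q ^ (m + 1)) * (1 - q ^ (2 * (m + 1) + 1)) -
      (1 + q ^ (m + 1)) * (1 - q ^ (m + 1 - j)) * (1 - q ^ (m + 1 + 1 + j))) = 0 := by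
    rw [← sum_congr rfl fun j hj ↦ certificate_sub_certificate_succ hq (mem_range_succ_iff.1 hj),
      sum_range_sub', certificate_zero, certificate_eq_zero_of_lt (Nat.lt_succ_self _), sub_zero]
  have contiguous : ∑ j ∈ range (m + 2), t j * ((1 - q ^ (m + 1)) * (1 - q ^ (2 * (m + 1) + 1)) -
      (1 + q ^ (m + 1)) * (1 - q ^ (m + 1 - j)) * (1 - q ^ (m + 1 + 1 + j))) =
        (1 - q ^ (m + 1)) * ((1 - q ^ (2 * m + 3)) * partialSum q (m + 1) -
          (1 + q ^ (m + 1)) * (1 - q ^ (m + 2)) * partialSum q m) := by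
    rw [partialSum_eq_sum_range (by omega : m + 1 < m + 2),
      partialSum_eq_sum_range (by omega : m < m + 2), mul_sum, mul_sum, ← sum_sub_distrib,
      mul_sum]
    refine sum_congr rfl fun j _ ↦ ?_
    linear_combination (1 + q ^ (m + 1)) * q ^ (j * (j + 1) / 2) * weight_mul_contiguous hq m j
  rw [contiguous, mul_eq_zero] at telescope
  exact sub_eq_zero.1 (telescope.resolve_left (one_sub_pow_ne_zero hq m.succ_ne_zero))

lemma partialSum_mul_prod_odd (hq : |q| < 1) (m : ℕ) :
    partialSum q m * ∏ i ∈ range (m + 1), (1 - q ^ (2 * i + 1)) =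
      (1 - q ^ (m + 1)) * ∏ i ∈ range m, (1 - q ^ (2 * i + 2)) := by
  induction m with
  | zero => simp [partialSum, weight]
  | succ m ih =>
    rw [prod_range_succ (fun i ↦ 1 - q ^ (2 * i + 1)) (m + 1),
      prod_range_succ (fun i ↦ 1 - q ^ (2 * i + 2)) m]
    linear_combination (∏ i ∈ range (m + 1), (1 - q ^ (2 * i + 1))) * partialSum_succ hq m +
      (1 + q ^ (m + 1)) * (1 - q ^ (m + 2)) * ih

lemma hasProd_one_sub_of_summable {ι : Type*} {f : ι → ℝ} (hf : Summable f) (hf1 : ∀ i, f i < 1) :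
    HasProd (fun i ↦ 1 - f i) (Real.exp (∑' i, Real.log (1 - f i))) := by
  refine Real.hasProd_of_hasSum_log (fun i ↦ sub_pos.2 (hf1 i)) ?_
  simpa [sub_eq_add_neg] using (Real.summable_log_one_add_of_summable hf.neg).hasSum

lemma summable_pow_two_mul_add (hq : |q| < 1) (c : ℕ) : Summable fun j : ℕ ↦ q ^ (2 * j + c) := by
  have hq2 : |q ^ 2| < 1 := by rw [abs_pow]; exact pow_lt_one₀ (abs_nonneg q) hq two_ne_zero
  simpa [pow_add, pow_mul] using (summable_geometric_of_abs_lt_one hq2).mul_right (q ^ c)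

lemma hasProd_one_sub_pow_two_mul_add (hq : |q| < 1) {c : ℕ} (hc : c ≠ 0) :
    HasProd (fun j : ℕ ↦ 1 - q ^ (2 * j + c))
      (Real.exp (∑' j : ℕ, Real.log (1 - q ^ (2 * j + c)))) :=
  hasProd_one_sub_of_summable (summable_pow_two_mul_add hq c) fun _ ↦
    sub_pos.1 (one_sub_pow_pos hq (by omega))

lemma summable_pow_mul_pow_triangle {r : ℝ} (hr₀ : 0 ≤ r) (hr : r < 1) (C : ℝ) :
    Summable fun j : ℕ ↦ C ^ j * r ^ (j * (j + 1) / 2) := by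
  refine summable_of_ratio_norm_eventually_le one_half_lt_one ?_
  have h : Tendsto (fun j : ℕ ↦ |C| * r ^ (j + 1)) atTop (𝓝 0) := by
    simpa using ((tendsto_pow_atTop_nhds_zero_of_lt_one hr₀ hr).comp
      (tendsto_add_atTop_nat 1)).const_mul |C|
  filter_upwards [h.eventually_le_const one_half_pos] with j hj
  have hratio : ‖C ^ (j + 1) * r ^ ((j + 1) * (j + 1 + 1) / 2)‖ =
      |C| * r ^ (j + 1) * ‖C ^ j * r ^ (j * (j + 1) / 2)‖ := by
    simp only [triangle_succ, norm_mul, norm_pow, Real.norm_eq_abs, abs_of_nonneg hr₀]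
    ring
  rw [hratio]
  exact mul_le_mul_of_nonneg_right hj (norm_nonneg _)

lemma abs_weight_le (hq : |q| < 1) (m j : ℕ) : |weight q m j| ≤ (2 / (1 - |q|)) ^ j := by
  have hfactor (i : ℕ) : |1 - q ^ (m - i)| ≤ 2 :=
    calc |1 - q ^ (m - i)| ≤ |1| + |q ^ (m - i)| := abs_sub _ _
      _ ≤ 1 + 1 := by
        rw [abs_one, abs_pow]
        gcongr
        exact pow_le_one₀ (abs_nonneg q) hq.le
      _ = 2 := one_add_one_eq_two
  calc |weight q m j| = ∏ i ∈ range j, |1 - q ^ (m - i)| / |1 - q ^ (m + 2 + i)| := by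
        simp only [weight, abs_prod, abs_div]
    _ ≤ ∏ _i ∈ range j, 2 / (1 - |q|) :=
        prod_le_prod (fun _ _ ↦ by positivity) fun i _ ↦ div_le_div₀ zero_le_two (hfactor i)
          (sub_pos.2 hq) ((one_sub_abs_le_one_sub_pow hq (by omega)).trans (le_abs_self _))
    _ = (2 / (1 - |q|)) ^ j := by rw [prod_const, card_range]

lemma tendsto_one_sub_pow (hq : |q| < 1) {f : ℕ → ℕ} (hf : Tendsto f atTop atTop) :
    Tendsto (fun m ↦ 1 - q ^ f m) atTop (𝓝 1) := by
  simpa using tendsto_const_nhds.sub ((tendsto_pow_atTop_nhds_zero_of_abs_lt_one hq).comp hf)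

lemma tendsto_weight (hq : |q| < 1) (j : ℕ) : Tendsto (fun m ↦ weight q m j) atTop (𝓝 1) := by
  rw [← prod_const_one (s := range j)]
  refine tendsto_finsetProd _ fun i _ ↦ ?_
  simpa [Pi.div_def] using (tendsto_one_sub_pow hq (tendsto_sub_atTop_nat i)).div
    (tendsto_one_sub_pow hq (tendsto_atTop_mono (fun m ↦ by dsimp; omega) tendsto_id)) one_ne_zero

lemma tendsto_partialSum (hq : |q| < 1) :
    Tendsto (partialSum q) atTop (𝓝 (∑' j : ℕ, q ^ (j * (j + 1) / 2))) := by
  simp_rw [funext fun m ↦ partialSum_eq_tsum (q := q) m]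
  refine tendsto_tsum_of_dominated_convergence
    (summable_pow_mul_pow_triangle (abs_nonneg q) hq (2 / (1 - |q|)))
    (fun j ↦ by simpa using (tendsto_weight hq j).const_mul (q ^ (j * (j + 1) / 2)))
    (Eventually.of_forall fun m j ↦ ?_)
  rw [norm_mul, norm_pow, Real.norm_eq_abs, Real.norm_eq_abs, mul_comm]
  exact mul_le_mul_of_nonneg_right (abs_weight_le hq m j) (by positivity)

end Gauss

namespace Dyson

/-- Gauss: `(q²;q²)_∞ / (q;q²)_∞ = Σ_{j≥0} q^{j(j+1)/2}`. -/
theorem stmt19 (q : ℝ) (hq : |q| < 1) :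
    (∏' j : ℕ, (1 - q ^ (2 * j + 2))) / (∏' j : ℕ, (1 - q ^ (2 * j + 1))) =
      ∑' j : ℕ, q ^ (j * (j + 1) / 2) := by
  have hodd := Gauss.hasProd_one_sub_pow_two_mul_add hq one_ne_zero
  have heven := Gauss.hasProd_one_sub_pow_two_mul_add hq two_ne_zero
  rw [hodd.tprod_eq, heven.tprod_eq, div_eq_iff (Real.exp_pos _).ne']
  have hlhs := (Gauss.tendsto_partialSum hq).mul
    (hodd.tendsto_prod_nat.comp (Filter.tendsto_add_atTop_nat 1))
  have hrhs := (Gauss.tendsto_one_sub_pow hq (Filter.tendsto_add_atTop_nat 1)).mul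
    heven.tendsto_prod_nat
  rw [one_mul] at hrhs
  exact tendsto_nhds_unique (hrhs.congr fun m ↦ (Gauss.partialSum_mul_prod_odd hq m).symm) hlhs

end Dyson
end
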